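/- Nonexistence for large thickness combined with the equator case: for Θ ∈ (1, ∞) there is no closed C¹ regular curve γ ⊂ S² with Δ[γ] ≥ Θ, while for Θ = 1 the set of such curves is exactly the set of great circles; in particular the maximal length of a closed spherical curve of thickness ≥ 1 is 2π. -/

import Mathlib

/-!
For distinct points `x, y, z` of the unit sphere, Heron's formula becomes
`16 · area² = (abc)² + 4 ⟪x × y, z⟫²`, so the circumradius `abc / (4 · area)` is at most `1`,
with equality exactly when `x, y, z` lie on a plane through the origin. Hence every closed
spherical curve (whose image is infinite) has thickness `≤ 1`, and thickness `≥ 1` puts its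
image inside a great circle. A regular closed curve inside a great circle covers it: at a maximum
`t₀` of `⟪p, γ t⟫` the tangent `γ' t₀ ≠ 0` is orthogonal to `p`, to `γ t₀` and to the normal of
the circle, which forces `p = ± γ t₀`. Finally a great circle has `μH[1]`-measure `2π`: its arc-length parametrisation is
`1`-Lipschitz, and projecting each of `n` equal arcs onto its tangent line gives the lower bound
`2n sin (π / n) → 2π`.
-/

open Metric Set Real Function MeasureTheory
open scoped RealInnerProductSpace

noncomputable section

abbrev E3 := EuclideanSpace ℝ (Fin 3)

open Classical in
/-- Circumcircle radius of three points in `ℝ³`: `∞` for collinear triples,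
otherwise `abc/(4·area)` via Heron's formula. -/
noncomputable def circumradius3 (x y z : E3) : ENNReal :=
  if Collinear ℝ ({x, y, z} : Set E3) then ⊤
  else ENNReal.ofReal (dist x y * dist y z * dist z x /
    Real.sqrt ((dist x y + dist y z + dist z x) * (-dist x y + dist y z + dist z x) *
      (dist x y - dist y z + dist z x) * (dist x y + dist y z - dist z x)))

/-- Thickness of a set of points (the image of a curve): infimum of circumradii
over all triples of distinct points. -/
noncomputable def thickness (Γ : Set E3) : ENNReal :=
  sInf {r | ∃ x ∈ Γ, ∃ y ∈ Γ, ∃ z ∈ Γ, x ≠ y ∧ y ≠ z ∧ x ≠ z ∧ r = circumradius3 x y z}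


/-- A closed `C¹` regular spherical curve. -/
def IsClosedSphericalCurve (γ : ℝ → E3) : Prop :=
  Periodic γ (2 * π) ∧ ContDiff ℝ 1 γ ∧ (∀ t, deriv γ t ≠ 0) ∧
    range γ ⊆ sphere (0 : E3) 1

open Filter Topology Matrix WithLp

lemma sq_real_inner_lt_one {F : Type*} [NormedAddCommGroup F] [InnerProductSpace ℝ F] {x y : F}
    (hx : ‖x‖ = 1) (hy : ‖y‖ = 1) (hxy : x ≠ y) (hxy' : x ≠ -y) : ⟪x, y⟫ ^ 2 < 1 := by
  rw [sq_lt_one_iff_abs_lt_one]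
  refine (abs_real_inner_le_norm x y).trans_eq (by rw [hx, hy, one_mul]) |>.lt_of_ne fun h => ?_
  rcases (abs_eq zero_le_one).1 h with h | h
  · exact hxy ((inner_eq_one_iff_of_norm_eq_one hx hy).1 h)
  · exact hxy' ((inner_eq_neg_one_iff_of_norm_eq_one hx hy).1 h)

section circleParam

variable {F : Type*} [NormedAddCommGroup F] [InnerProductSpace ℝ F]

def circleParam (a : Fin 2 → F) (t : ℝ) : F := cos t • a 0 + sin t • a 1

variable {a : Fin 2 → F}

lemma circleParam_periodic : Periodic (circleParam a) (2 * π) := by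
  intro t
  simp [circleParam]

lemma hasDerivAt_circleParam (t : ℝ) :
    HasDerivAt (circleParam a) (circleParam a (t + π / 2)) t := by
  rw [circleParam, cos_add_pi_div_two, sin_add_pi_div_two]
  exact ((hasDerivAt_cos t).smul_const (a 0)).add ((hasDerivAt_sin t).smul_const (a 1))

lemma contDiff_circleParam : ContDiff ℝ 1 (circleParam a) := by
  unfold circleParam; fun_prop

lemma inner_circleParam (ha : Orthonormal ℝ a) (s t : ℝ) :
    ⟪circleParam a s, circleParam a t⟫ = cos (s - t) := by
  have h01 : ⟪a 0, a 1⟫ = 0 := ha.2 (by decide)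
  simp only [circleParam, inner_add_left, inner_add_right, real_inner_smul_left,
    real_inner_smul_right, real_inner_self_eq_norm_sq, ha.1, real_inner_comm (a 0), h01, cos_sub]
  ring

lemma norm_circleParam (ha : Orthonormal ℝ a) (t : ℝ) : ‖circleParam a t‖ = 1 := by
  rw [norm_eq_sqrt_real_inner, inner_circleParam ha, sub_self, cos_zero, sqrt_one]

lemma lipschitzWith_circleParam (ha : Orthonormal ℝ a) : LipschitzWith 1 (circleParam a) :=
  lipschitzWith_of_nnnorm_deriv_le (fun t => (hasDerivAt_circleParam t).differentiableAt)
    fun t => by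
      rw [(hasDerivAt_circleParam t).deriv, ← NNReal.coe_le_coe, coe_nnnorm, norm_circleParam ha]
      rfl

lemma injOn_circleParam (ha : Orthonormal ℝ a) (b : ℝ) :
    InjOn (circleParam a) (Ico b (b + 2 * π)) := by
  intro s hs t ht hst
  have h : cos (s - t) = 1 := by
    rw [← inner_circleParam ha, hst, real_inner_self_eq_norm_sq, norm_circleParam ha, one_pow]
  have := (cos_eq_one_iff_of_lt_of_lt (by linarith [hs.1, ht.2]) (by linarith [hs.2, ht.1])).1 h
  linarith

variable [MeasurableSpace F] [BorelSpace F]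

lemma hausdorffMeasure_range_circleParam_le (ha : Orthonormal ℝ a) :
    μH[1] (range (circleParam a)) ≤ ENNReal.ofReal (2 * π) := by
  rw [← circleParam_periodic.image_Ioc two_pi_pos 0]
  calc μH[1] (circleParam a '' Ioc 0 (0 + 2 * π))
      ≤ (1 : NNReal) ^ (1 : ℝ) * μH[1] (Ioc 0 (0 + 2 * π)) :=
        (lipschitzWith_circleParam ha).hausdorffMeasure_image_le zero_le_one _
    _ = ENNReal.ofReal (2 * π) := by simp [hausdorffMeasure_real]

/-- Projecting onto the tangent line at the midpoint is `1`-Lipschitz and maps the arc onto a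
chord of length `2 sin c`. -/
lemma ofReal_two_mul_sin_le_hausdorffMeasure_image (ha : Orthonormal ℝ a) (b : ℝ) {c : ℝ}
    (hc : 0 ≤ c) :
    ENNReal.ofReal (2 * sin c) ≤ μH[1] (circleParam a '' Ioo (b - c) (b + c)) := by
  set u := circleParam a (b + π / 2)
  have hu : LipschitzWith 1 (fun x => ⟪u, x⟫) := by
    have hnorm : ‖innerSL ℝ u‖₊ = 1 := Subtype.ext (by simpa using norm_circleParam ha _)
    simpa [hnorm] using (innerSL ℝ u).lipschitz
  have hproj : ∀ t, ⟪u, circleParam a t⟫ = sin (t - b) := fun t => by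
    rw [inner_circleParam ha, ← cos_pi_div_two_sub]; ring_nf
  have hchord :
      Ioo (-sin c) (sin c) ⊆ (fun x => ⟪u, x⟫) '' (circleParam a '' Ioo (b - c) (b + c)) := by
    rw [image_image]
    simp only [hproj]
    simpa [← sin_neg] using intermediate_value_Ioo (by linarith : b - c ≤ b + c)
      (by fun_prop : Continuous fun t => sin (t - b)).continuousOn
  calc ENNReal.ofReal (2 * sin c) = μH[1] (Ioo (-sin c) (sin c)) := by
        rw [hausdorffMeasure_real, volume_Ioo]; ring_nf
    _ ≤ μH[1] ((fun x => ⟪u, x⟫) '' (circleParam a '' Ioo (b - c) (b + c))) :=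
        measure_mono hchord
    _ ≤ (1 : NNReal) ^ (1 : ℝ) * μH[1] (circleParam a '' Ioo (b - c) (b + c)) :=
        hu.hausdorffMeasure_image_le zero_le_one _
    _ = _ := by simp

lemma sum_hausdorffMeasure_arcs_le (ha : Orthonormal ℝ a) {n : ℕ} (hn : 0 < n) :
    ∑ k ∈ Finset.range n, μH[1] (circleParam a '' Ico (k * (2 * π / n)) ((k + 1) * (2 * π / n)))
      ≤ μH[1] (range (circleParam a)) := by
  set h := 2 * π / n with h_def
  set I : ℕ → Set ℝ := fun k => Ico (k * h) ((k + 1) * h)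
  have hI : ∀ k ∈ Finset.range n, I k ⊆ Ico 0 (0 + 2 * π) := by
    intro k hk
    have hk : (k : ℝ) + 1 ≤ n := by exact_mod_cast Finset.mem_range.1 hk
    refine Ico_subset_Ico (by positivity) ?_
    calc (k + 1) * h ≤ n * h := by gcongr
      _ = 0 + 2 * π := by rw [zero_add, h_def, mul_div_cancel₀ _ (by positivity)]
  have hinj := injOn_circleParam ha 0
  have hdisj : (Finset.range n : Set ℕ).PairwiseDisjoint fun k => circleParam a '' I k := by
    intro j hj k hk hjk
    have hIjk : Disjoint (I j) (I k) := by
      simpa only [Function.onFun, zsmul_eq_mul, zero_add, Int.cast_add, Int.cast_natCast,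
        Int.cast_one] using
        pairwise_disjoint_Ico_add_zsmul (0 : ℝ) h (show (j : ℤ) ≠ k by exact_mod_cast hjk)
    rw [Function.onFun, disjoint_iff_inter_eq_empty, ← hinj.image_inter (hI j hj) (hI k hk),
      hIjk.inter_eq, image_empty]
  have hmeas : ∀ k ∈ Finset.range n, MeasurableSet (circleParam a '' I k) := fun k hk =>
    measurableSet_Ico.image_of_continuousOn_injOn
      (lipschitzWith_circleParam ha).continuous.continuousOn (hinj.mono (hI k hk))
  rw [← measure_biUnion_finset hdisj hmeas]
  exact measure_mono (iUnion₂_subset fun k _ => image_subset_range _ _)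

lemma ofReal_two_pi_mul_sinc_le_hausdorffMeasure_range (ha : Orthonormal ℝ a) {n : ℕ}
    (hn : 0 < n) : ENNReal.ofReal (2 * π * sinc (π / n)) ≤ μH[1] (range (circleParam a)) := by
  have harc : ∀ k : ℕ, ENNReal.ofReal (2 * sin (π / n)) ≤
      μH[1] (circleParam a '' Ico (k * (2 * π / n)) ((k + 1) * (2 * π / n))) := fun k =>
    (ofReal_two_mul_sin_le_hausdorffMeasure_image ha ((k + 1 / 2) * (2 * π / n))
      (by positivity)).trans (measure_mono (image_mono (Ioo_subset_Ico_self.trans_eq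
        (by congr 1 <;> ring))))
  calc ENNReal.ofReal (2 * π * sinc (π / n))
      = ∑ _k ∈ Finset.range n, ENNReal.ofReal (2 * sin (π / n)) := by
        rw [Finset.sum_const, Finset.card_range, nsmul_eq_mul, ← ENNReal.ofReal_natCast,
          ← ENNReal.ofReal_mul (Nat.cast_nonneg n), sinc_of_ne_zero (by positivity)]
        congr 1
        field_simp
    _ ≤ _ := Finset.sum_le_sum fun k _ => harc k
    _ ≤ _ := sum_hausdorffMeasure_arcs_le ha hn

lemma hausdorffMeasure_range_circleParam (ha : Orthonormal ℝ a) :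
    μH[1] (range (circleParam a)) = ENNReal.ofReal (2 * π) := by
  refine le_antisymm (hausdorffMeasure_range_circleParam_le ha) (le_of_tendsto ?_
    ((eventually_gt_atTop 0).mono fun n hn =>
      ofReal_two_pi_mul_sinc_le_hausdorffMeasure_range ha hn))
  have h := ((continuous_sinc.tendsto 0).comp
    (tendsto_const_div_atTop_nhds_zero_nat π)).const_mul (2 * π)
  rw [sinc_zero, mul_one] at h
  exact ENNReal.tendsto_ofReal h

end circleParam

def cross (x y : E3) : E3 := toLp 2 (ofLp x ⨯₃ ofLp y)

lemma inner_eq_dotProduct (x y : E3) : ⟪x, y⟫ = ofLp x ⬝ᵥ ofLp y := by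
  rw [EuclideanSpace.inner_eq_star_dotProduct, star_trivial, dotProduct_comm]

lemma inner_cross_left (x y : E3) : ⟪cross x y, x⟫ = 0 := by
  rw [inner_eq_dotProduct, cross, dotProduct_comm, dot_self_cross]

lemma inner_cross_right (x y : E3) : ⟪cross x y, y⟫ = 0 := by
  rw [inner_eq_dotProduct, cross, dotProduct_comm, dot_cross_self]

lemma norm_cross_sq (x y : E3) : ‖cross x y‖ ^ 2 = ‖x‖ ^ 2 * ‖y‖ ^ 2 - ⟪x, y⟫ ^ 2 := by
  simp only [← real_inner_self_eq_norm_sq, inner_eq_dotProduct, cross, cross_dot_cross,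
    dotProduct_comm (ofLp y) (ofLp x)]
  ring

lemma sq_inner_cross (x y z : E3) :
    ⟪cross x y, z⟫ ^ 2 = ‖x‖ ^ 2 * ‖y‖ ^ 2 * ‖z‖ ^ 2 + 2 * ⟪x, y⟫ * ⟪y, z⟫ * ⟪z, x⟫
      - ‖x‖ ^ 2 * ⟪y, z⟫ ^ 2 - ‖y‖ ^ 2 * ⟪z, x⟫ ^ 2 - ‖z‖ ^ 2 * ⟪x, y⟫ ^ 2 := by
  simp only [← real_inner_self_eq_norm_sq, inner_eq_dotProduct, cross, cross_apply, dotProduct,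
    Fin.sum_univ_three, cons_val_zero, cons_val_one, cons_val]
  ring

lemma eq_zero_of_inner_cross_ne_zero {x y z w : E3} (h : ⟪cross x y, z⟫ ≠ 0)
    (hx : ⟪x, w⟫ = 0) (hy : ⟪y, w⟫ = 0) (hz : ⟪z, w⟫ = 0) : w = 0 := by
  rw [inner_eq_dotProduct, cross, dotProduct_comm, triple_product_permutation,
    triple_product_eq_det] at h
  have hM : Matrix.of ![ofLp x, ofLp y, ofLp z] *ᵥ ofLp w = 0 := by
    ext i; fin_cases i <;> simp [mulVec, ← inner_eq_dotProduct, hx, hy, hz]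
  simpa using eq_zero_of_mulVec_eq_zero h hM

lemma div_sqrt_sq_add_le_one (m d : ℝ) : m / √(m ^ 2 + 4 * d ^ 2) ≤ 1 :=
  div_le_one_of_le₀ (le_sqrt_of_sq_le (by nlinarith [sq_nonneg d])) (sqrt_nonneg _)

lemma one_le_div_sqrt_sq_add_iff {m d : ℝ} (hm : 0 < m) :
    1 ≤ m / √(m ^ 2 + 4 * d ^ 2) ↔ d = 0 := by
  rw [one_le_div (sqrt_pos.2 (by positivity)), sqrt_le_left hm.le]
  constructor
  · intro h
    nlinarith [sq_nonneg d]
  · rintro rfl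
    simp

section sphere

variable {x y z : E3}

lemma dist_sq_of_mem_sphere (hx : x ∈ sphere (0 : E3) 1) (hy : y ∈ sphere (0 : E3) 1) :
    dist x y ^ 2 = 2 - 2 * ⟪x, y⟫ := by
  rw [mem_sphere_zero_iff_norm] at hx hy
  rw [dist_eq_norm, norm_sub_sq_real, hx, hy]
  ring

lemma heron_of_mem_sphere (hx : x ∈ sphere (0 : E3) 1) (hy : y ∈ sphere (0 : E3) 1)
    (hz : z ∈ sphere (0 : E3) 1) :
    (dist x y + dist y z + dist z x) * (-dist x y + dist y z + dist z x) *
      (dist x y - dist y z + dist z x) * (dist x y + dist y z - dist z x) =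
    (dist x y * dist y z * dist z x) ^ 2 + 4 * ⟪cross x y, z⟫ ^ 2 := by
  have hxy : ⟪x, y⟫ = 1 - dist x y ^ 2 / 2 := by rw [dist_sq_of_mem_sphere hx hy]; ring
  have hyz : ⟪y, z⟫ = 1 - dist y z ^ 2 / 2 := by rw [dist_sq_of_mem_sphere hy hz]; ring
  have hzx : ⟪z, x⟫ = 1 - dist z x ^ 2 / 2 := by rw [dist_sq_of_mem_sphere hz hx]; ring
  rw [mem_sphere_zero_iff_norm] at hx hy hz
  rw [sq_inner_cross, hx, hy, hz, hxy, hyz, hzx]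
  ring

lemma circumradius3_of_mem_sphere (hx : x ∈ sphere (0 : E3) 1) (hy : y ∈ sphere (0 : E3) 1)
    (hz : z ∈ sphere (0 : E3) 1) (hxy : x ≠ y) (hyz : y ≠ z) (hxz : x ≠ z) :
    circumradius3 x y z = ENNReal.ofReal (dist x y * dist y z * dist z x /
      √((dist x y * dist y z * dist z x) ^ 2 + 4 * ⟪cross x y, z⟫ ^ 2)) := by
  have hcos : EuclideanGeometry.Cospherical ({x, y, z} : Set E3) :=
    ⟨0, 1, by simp [mem_sphere_zero_iff_norm.1 hx, mem_sphere_zero_iff_norm.1 hy,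
      mem_sphere_zero_iff_norm.1 hz]⟩
  rw [circumradius3, if_neg (affineIndependent_iff_not_collinear_set.1
    (hcos.affineIndependent_of_ne hxy hxz hyz)), heron_of_mem_sphere hx hy hz]

lemma circumradius3_le_one (hx : x ∈ sphere (0 : E3) 1) (hy : y ∈ sphere (0 : E3) 1)
    (hz : z ∈ sphere (0 : E3) 1) (hxy : x ≠ y) (hyz : y ≠ z) (hxz : x ≠ z) :
    circumradius3 x y z ≤ 1 := by
  rw [circumradius3_of_mem_sphere hx hy hz hxy hyz hxz, ENNReal.ofReal_le_one]
  exact div_sqrt_sq_add_le_one _ _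

lemma one_le_circumradius3_iff (hx : x ∈ sphere (0 : E3) 1) (hy : y ∈ sphere (0 : E3) 1)
    (hz : z ∈ sphere (0 : E3) 1) (hxy : x ≠ y) (hyz : y ≠ z) (hxz : x ≠ z) :
    1 ≤ circumradius3 x y z ↔ ⟪cross x y, z⟫ = 0 := by
  rw [circumradius3_of_mem_sphere hx hy hz hxy hyz hxz, ENNReal.one_le_ofReal]
  exact one_le_div_sqrt_sq_add_iff (by
    have := dist_pos.2 hxy; have := dist_pos.2 hyz; have := dist_pos.2 hxz.symm; positivity)

end sphere

section thickness

variable {Γ : Set E3}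

lemma thickness_le_circumradius3 {x y z : E3} (hx : x ∈ Γ) (hy : y ∈ Γ) (hz : z ∈ Γ)
    (hxy : x ≠ y) (hyz : y ≠ z) (hxz : x ≠ z) : thickness Γ ≤ circumradius3 x y z :=
  sInf_le ⟨x, hx, y, hy, z, hz, hxy, hyz, hxz, rfl⟩

lemma le_thickness_iff {r : ENNReal} : r ≤ thickness Γ ↔ ∀ x ∈ Γ, ∀ y ∈ Γ, ∀ z ∈ Γ,
    x ≠ y → y ≠ z → x ≠ z → r ≤ circumradius3 x y z := by
  refine ⟨fun h x hx y hy z hz hxy hyz hxz =>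
    h.trans (thickness_le_circumradius3 hx hy hz hxy hyz hxz), fun h => le_sInf ?_⟩
  rintro _ ⟨x, hx, y, hy, z, hz, hxy, hyz, hxz, rfl⟩
  exact h x hx y hy z hz hxy hyz hxz

lemma thickness_le_one (hΓ : Γ ⊆ sphere 0 1) (hinf : Γ.Infinite) : thickness Γ ≤ 1 := by
  obtain ⟨t, htΓ, ht⟩ := hinf.exists_subset_card_eq 3
  obtain ⟨x, y, z, hxy, hxz, hyz, rfl⟩ := Finset.card_eq_three.1 ht
  have hx : x ∈ Γ := htΓ (by simp)
  have hy : y ∈ Γ := htΓ (by simp)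
  have hz : z ∈ Γ := htΓ (by simp)
  exact (thickness_le_circumradius3 hx hy hz hxy hyz hxz).trans
    (circumradius3_le_one (hΓ hx) (hΓ hy) (hΓ hz) hxy hyz hxz)

lemma one_le_thickness_iff (hΓ : Γ ⊆ sphere 0 1) : 1 ≤ thickness Γ ↔
    ∀ x ∈ Γ, ∀ y ∈ Γ, ∀ z ∈ Γ, x ≠ y → y ≠ z → x ≠ z → ⟪cross x y, z⟫ = 0 := by
  rw [le_thickness_iff]
  refine forall₂_congr fun x hx => forall₂_congr fun y hy => forall₂_congr fun z hz => ?_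
  exact forall₃_congr fun hxy hyz hxz =>
    one_le_circumradius3_iff (hΓ hx) (hΓ hy) (hΓ hz) hxy hyz hxz

end thickness

def greatCircle (v : E3) : Set E3 := {x ∈ sphere (0 : E3) 1 | ⟪v, x⟫ = 0}

lemma one_le_thickness_iff_exists_subset_greatCircle {Γ : Set E3} (hΓ : Γ ⊆ sphere 0 1)
    (hinf : Γ.Infinite) : 1 ≤ thickness Γ ↔ ∃ v ≠ 0, Γ ⊆ greatCircle v := by
  rw [one_le_thickness_iff hΓ]
  constructor
  · intro h
    obtain ⟨x, hx⟩ := hinf.nonempty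
    obtain ⟨y, hy, hyx⟩ := (hinf.sdiff (toFinite {x, -x})).nonempty
    have hxy : x ≠ y := fun h => hyx (by simp [h])
    have hxy' : x ≠ -y := fun h => hyx (by simp [h])
    have hx1 := mem_sphere_zero_iff_norm.1 (hΓ hx)
    have hy1 := mem_sphere_zero_iff_norm.1 (hΓ hy)
    refine ⟨cross x y, fun h0 => ?_, fun z hz => ⟨hΓ hz, ?_⟩⟩
    · have := norm_cross_sq x y
      rw [h0, norm_zero, hx1, hy1] at this
      linarith [sq_real_inner_lt_one hx1 hy1 hxy hxy']
    · rcases eq_or_ne z x with rfl | hzx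
      · exact inner_cross_left z y
      rcases eq_or_ne z y with rfl | hzy
      · exact inner_cross_right x z
      exact h x hx y hy z hz hxy hzy.symm hzx.symm
  · rintro ⟨v, hv, hΓv⟩ x hx y hy z hz - - -
    by_contra h
    exact hv (eq_zero_of_inner_cross_ne_zero h (by rw [real_inner_comm]; exact (hΓv hx).2)
      (by rw [real_inner_comm]; exact (hΓv hy).2) (by rw [real_inner_comm]; exact (hΓv hz).2))

lemma eq_or_eq_neg_of_mem_greatCircle {v p q w : E3} (hv : v ≠ 0) (hp : p ∈ greatCircle v)
    (hq : q ∈ greatCircle v) (hw : w ≠ 0) (hvw : ⟪v, w⟫ = 0) (hpw : ⟪p, w⟫ = 0)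
    (hqw : ⟪q, w⟫ = 0) : p = q ∨ p = -q := by
  by_contra! h
  have hp1 := mem_sphere_zero_iff_norm.1 hp.1
  have hq1 := mem_sphere_zero_iff_norm.1 hq.1
  have hpq := sq_real_inner_lt_one hp1 hq1 h.1 h.2
  have hvpq : ⟪cross v p, q⟫ ^ 2 = ‖v‖ ^ 2 * (1 - ⟪p, q⟫ ^ 2) := by
    rw [sq_inner_cross, hp.2, real_inner_comm v q, hq.2, hp1, hq1]
    ring
  refine hw (eq_zero_of_inner_cross_ne_zero (fun h0 => ?_) hvw hpw hqw)
  rw [h0] at hvpq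
  nlinarith [mul_pos (pow_pos (norm_pos_iff.2 hv) 2) (sub_pos.2 hpq)]

namespace IsClosedSphericalCurve

variable {γ : ℝ → E3}

lemma norm_eq_one (hγ : IsClosedSphericalCurve γ) (t : ℝ) : ‖γ t‖ = 1 :=
  mem_sphere_zero_iff_norm.1 (hγ.2.2.2 (mem_range_self t))

lemma hasDerivAt_inner (hγ : IsClosedSphericalCurve γ) (p : E3) (t : ℝ) :
    HasDerivAt (fun s => ⟪p, γ s⟫) ⟪p, deriv γ t⟫ t := by
  simpa using (hasDerivAt_const t p).inner ℝ ((hγ.2.1.differentiable one_ne_zero t).hasDerivAt)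

lemma inner_deriv_eq_zero_of_forall_inner_eq (hγ : IsClosedSphericalCurve γ) {p : E3} {c : ℝ}
    (h : ∀ s, ⟪p, γ s⟫ = c) (t : ℝ) : ⟪p, deriv γ t⟫ = 0 :=
  (hγ.hasDerivAt_inner p t).unique (by simpa only [h] using hasDerivAt_const t c)

lemma inner_self_deriv (hγ : IsClosedSphericalCurve γ) (t : ℝ) : ⟪γ t, deriv γ t⟫ = 0 := by
  have hd := (hγ.2.1.differentiable one_ne_zero t).hasDerivAt
  have h1 : HasDerivAt (fun s => ⟪γ s, γ s⟫) (2 * ⟪γ t, deriv γ t⟫) t := by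
    simpa [real_inner_comm (deriv γ t), two_mul] using hd.inner ℝ hd
  have h2 : (fun s => ⟪γ s, γ s⟫) = fun _ => 1 := by
    ext s; rw [real_inner_self_eq_norm_sq, hγ.norm_eq_one, one_pow]
  rw [h2] at h1
  linarith [h1.unique (hasDerivAt_const t 1)]

lemma not_forall_eq (hγ : IsClosedSphericalCurve γ) (c : E3) : ¬ ∀ t, γ t = c := fun h =>
  hγ.2.2.1 0 (by rw [show γ = fun _ => c from funext h, deriv_const])

lemma range_infinite (hγ : IsClosedSphericalCurve γ) : (range γ).Infinite :=
  (isPreconnected_range hγ.2.1.continuous).infinite_of_nontrivial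
    (not_subsingleton_iff.1 fun hs => hγ.not_forall_eq (γ 0) fun t => hs ⟨t, rfl⟩ ⟨0, rfl⟩)

lemma exists_forall_inner_le (hγ : IsClosedSphericalCurve γ) (p : E3) :
    ∃ t₀, ∀ t, ⟪p, γ t⟫ ≤ ⟪p, γ t₀⟫ := by
  have hper : Periodic (fun t => ⟪p, γ t⟫) (2 * π) := fun t => by simp only [hγ.1 t]
  obtain ⟨_, ⟨t₀, rfl⟩, hmax⟩ := (hper.compact_of_continuous two_pi_pos.ne'
    (continuous_const.inner hγ.2.1.continuous)).exists_isGreatest (range_nonempty _)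
  exact ⟨t₀, fun t => hmax ⟨t, rfl⟩⟩

/-- At a maximum `t₀` of `⟪p, γ t⟫` we get `p = ± γ t₀`; the minus sign would force `γ ≡ -p`. -/
lemma range_eq_greatCircle (hγ : IsClosedSphericalCurve γ) {v : E3} (hv : v ≠ 0)
    (h : range γ ⊆ greatCircle v) : range γ = greatCircle v := by
  refine h.antisymm fun p hp => ?_
  obtain ⟨t₀, ht₀⟩ := hγ.exists_forall_inner_le p
  have hpt₀ : ⟪p, deriv γ t₀⟫ = 0 :=
    IsLocalMax.hasDerivAt_eq_zero (Eventually.of_forall ht₀) (hγ.hasDerivAt_inner p t₀)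
  have hvt₀ : ⟪v, deriv γ t₀⟫ = 0 :=
    hγ.inner_deriv_eq_zero_of_forall_inner_eq (fun s => (h (mem_range_self s)).2) t₀
  rcases eq_or_eq_neg_of_mem_greatCircle hv hp (h (mem_range_self t₀)) (hγ.2.2.1 t₀) hvt₀ hpt₀
    (hγ.inner_self_deriv t₀) with heq | hneg
  · exact ⟨t₀, heq.symm⟩
  refine absurd (fun t => ?_) (hγ.not_forall_eq (-p))
  have hp1 := mem_sphere_zero_iff_norm.1 hp.1
  have hle : ⟪-p, γ t⟫ ≤ 1 :=
    (real_inner_le_norm _ _).trans_eq (by rw [norm_neg, hp1, hγ.norm_eq_one, one_mul])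
  have hge : 1 ≤ ⟪-p, γ t⟫ := by
    have := ht₀ t
    rw [← neg_eq_iff_eq_neg.2 hneg, inner_neg_right, real_inner_self_eq_norm_sq, hp1] at this
    rw [inner_neg_left]
    linarith
  exact ((inner_eq_one_iff_of_norm_eq_one (by rw [norm_neg, hp1]) (hγ.norm_eq_one t)).1
    (hle.antisymm hge)).symm

lemma one_le_thickness_iff (hγ : IsClosedSphericalCurve γ) :
    1 ≤ thickness (range γ) ↔ ∃ v ≠ 0, range γ = greatCircle v := by
  rw [one_le_thickness_iff_exists_subset_greatCircle hγ.2.2.2 hγ.range_infinite]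
  exact exists_congr fun v => and_congr_right fun hv => ⟨hγ.range_eq_greatCircle hv, Eq.subset⟩

end IsClosedSphericalCurve

lemma isClosedSphericalCurve_circleParam {a : Fin 2 → E3} (ha : Orthonormal ℝ a) :
    IsClosedSphericalCurve (circleParam a) := by
  refine ⟨circleParam_periodic, contDiff_circleParam, fun t h => ?_,
    range_subset_iff.2 fun t => mem_sphere_zero_iff_norm.2 (norm_circleParam ha t)⟩
  have := norm_circleParam ha (t + π / 2)
  rw [← (hasDerivAt_circleParam t).deriv, h, norm_zero] at this
  exact zero_ne_one this

lemma exists_orthonormal_orthogonal {v : E3} (hv : v ≠ 0) :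
    ∃ a : Fin 2 → E3, Orthonormal ℝ a ∧ ∀ i, ⟪v, a i⟫ = 0 := by
  have : Fact (Module.finrank ℝ E3 = 2 + 1) := ⟨by simp⟩
  let b := OrthonormalBasis.fromOrthogonalSpanSingleton (𝕜 := ℝ) 2 hv
  exact ⟨(ℝ ∙ v)ᗮ.subtypeₗᵢ ∘ b, b.orthonormal.comp_linearIsometry _,
    fun i => Submodule.mem_orthogonal_singleton_iff_inner_right.1 (b i).2⟩

lemma exists_circleParam_range_eq_greatCircle {v : E3} (hv : v ≠ 0) :
    ∃ a : Fin 2 → E3, Orthonormal ℝ a ∧ range (circleParam a) = greatCircle v := by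
  obtain ⟨a, ha, hav⟩ := exists_orthonormal_orthogonal hv
  refine ⟨a, ha, (isClosedSphericalCurve_circleParam ha).range_eq_greatCircle hv ?_⟩
  rintro _ ⟨t, rfl⟩
  exact ⟨mem_sphere_zero_iff_norm.2 (norm_circleParam ha t), by
    simp [circleParam, inner_add_right, real_inner_smul_right, hav]⟩

lemma hausdorffMeasure_greatCircle {v : E3} (hv : v ≠ 0) :
    μH[1] (greatCircle v) = ENNReal.ofReal (2 * π) := by
  obtain ⟨a, ha, h⟩ := exists_circleParam_range_eq_greatCircle hv
  rw [← h, hausdorffMeasure_range_circleParam ha]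

/-- For `Θ > 1` there is no closed spherical curve of thickness `≥ Θ`; the
closed spherical curves of thickness `≥ 1` are exactly those whose image is a
great circle; and the maximal length (1-dimensional Hausdorff measure of the
image) of a closed spherical curve of thickness `≥ 1` is `2π`. -/
theorem thickness_ge_one_classification :
    (∀ Θ : ℝ, 1 < Θ →
      ¬ ∃ γ : ℝ → E3, IsClosedSphericalCurve γ ∧
        ENNReal.ofReal Θ ≤ thickness (range γ)) ∧
    (∀ γ : ℝ → E3, IsClosedSphericalCurve γ →
      (1 ≤ thickness (range γ) ↔
        ∃ v : E3, v ≠ 0 ∧ range γ = {x ∈ sphere (0 : E3) 1 | ⟪v, x⟫ = 0})) ∧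
    IsGreatest {L : ENNReal | ∃ γ : ℝ → E3, IsClosedSphericalCurve γ ∧
        1 ≤ thickness (range γ) ∧ L = μH[1] (range γ)}
      (ENNReal.ofReal (2 * π)) := by
  refine ⟨fun Θ hΘ ⟨γ, hγ, hΘγ⟩ => ?_, fun γ hγ => hγ.one_le_thickness_iff, ?_, ?_⟩
  · exact (ENNReal.one_lt_ofReal.2 hΘ).not_ge
      (hΘγ.trans (thickness_le_one hγ.2.2.2 hγ.range_infinite))
  · obtain ⟨a, ha, hrange⟩ :=
      exists_circleParam_range_eq_greatCircle (v := EuclideanSpace.single 0 1) (by simp)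
    have hγ := isClosedSphericalCurve_circleParam ha
    exact ⟨circleParam a, hγ, hγ.one_le_thickness_iff.2 ⟨_, by simp, hrange⟩,
      (hausdorffMeasure_range_circleParam ha).symm⟩
  · rintro _ ⟨γ, hγ, hthick, rfl⟩
    obtain ⟨v, hv, hrange⟩ := hγ.one_le_thickness_iff.1 hthick
    rw [hrange, hausdorffMeasure_greatCircle hv]
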